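/- arXiv:0809.1261 — 3 statements merged into one kernel-verified Lean document; each statement's English description precedes it below -/
import Mathlib

section
/- Let (A_i), (B_i), (t_i) be sequences in SL(2,ℂ). Suppose A_i → A and B_i → B in SL(2,ℂ), where A and B are loxodromic and have no common eigenvector in ℂ², and suppose that both sequences (t_i A_i t_i⁻¹) and (t_i B_i t_i⁻¹) converge in SL(2,ℂ). Then the sequence (t_i) has a convergent subsequence in SL(2,ℂ). -/
open Matrix Filter Topology

abbrev SL2C := Matrix.SpecialLinearGroup (Fin 2) ℂ

/-- An element of SL(2,ℂ) is loxodromic if there is no real `r` with `0 ≤ r ≤ 4`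
such that `(tr A)² = r`. -/
def Loxodromic (A : SL2C) : Prop :=
  ¬ ∃ r : ℝ, 0 ≤ r ∧ r ≤ 4 ∧
    (Matrix.trace (A : Matrix (Fin 2) (Fin 2) ℂ)) ^ 2 = (r : ℂ)

/-- Convergence in SL(2,ℂ), in the topology induced from the 2×2 complex matrices. -/
def SLTendsto (A : ℕ → SL2C) (L : SL2C) : Prop :=
  Filter.Tendsto (fun i => (A i : Matrix (Fin 2) (Fin 2) ℂ)) Filter.atTop
    (nhds (L : Matrix (Fin 2) (Fin 2) ℂ))

/-- `A` and `B` have no common eigenvector in ℂ². -/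
def NoCommonEigenvector (A B : SL2C) : Prop :=
  ¬ ∃ v : Fin 2 → ℂ, v ≠ 0 ∧
    (∃ μ : ℂ, (A : Matrix (Fin 2) (Fin 2) ℂ).mulVec v = μ • v) ∧
    (∃ ν : ℂ, (B : Matrix (Fin 2) (Fin 2) ℂ).mulVec v = ν • v)

/-!
If the norms `‖t i‖` stay bounded along a subsequence, a further subsequence converges, and its
limit again has determinant `1`. Otherwise normalise: a subsequence of `t i / ‖t i‖` converges to
a matrix `s` of norm `1` and determinant `lim ‖t i‖⁻² = 0`. As `(t i)⁻¹ = adj (t i)`, the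
rescaled conjugates `‖t i‖⁻² • t i C i (t i)⁻¹` tend to `s C adj s`, and to `0` because the
conjugates converge; so `s A' adj s = s B' adj s = 0`. For a nonzero singular `2 × 2` matrix `s`,
`adj s ≠ 0` and the image of `adj s` is the kernel line of `s`, which is therefore invariant
under `A'` and `B'`: a common eigenvector.
-/

attribute [local instance] Matrix.normedAddCommGroup Matrix.normedSpace

theorem exists_tendsto_subseq_of_not_tendsto_norm_atTop {E : Type*} [SeminormedAddCommGroup E]
    [ProperSpace E] {x : ℕ → E} (hx : ¬Tendsto (fun i => ‖x i‖) atTop atTop) :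
    ∃ a : E, ∃ φ : ℕ → ℕ, StrictMono φ ∧ Tendsto (x ∘ φ) atTop (𝓝 a) := by
  simp only [tendsto_atTop, not_forall, not_eventually, not_le] at hx
  obtain ⟨b, hb⟩ := hx
  obtain ⟨a, -, hφ⟩ := tendsto_subseq_of_frequently_bounded
    (Metric.isBounded_ball (x := 0) (r := b)) (hb.mono fun i hi => mem_ball_zero_iff.mpr hi)
  exact ⟨a, hφ⟩

theorem Submodule.exists_smul_eq_of_finrank_le_one {K V : Type*} [DivisionRing K]
    [AddCommGroup V] [Module K V] [FiniteDimensional K V] {S : Submodule K V}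
    (hS : Module.finrank K S ≤ 1) {v w : V} (hv : v ∈ S) (hv0 : v ≠ 0) (hw : w ∈ S) :
    ∃ c : K, c • v = w := by
  have hS1 : Module.finrank K S = 1 :=
    hS.antisymm (Submodule.one_le_finrank_iff.mpr ((Submodule.ne_bot_iff S).mpr ⟨v, hv, hv0⟩))
  rw [eq_span_singleton_of_mem_of_finrank_eq_one hS1 hv hv0] at hw
  exact Submodule.mem_span_singleton.mp hw

namespace Matrix

variable {n K : Type*} [Fintype n] [DecidableEq n] [Field K]

theorem finrank_ker_mulVecLin_lt_card {s : Matrix n n K} (hs : s ≠ 0) :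
    Module.finrank K (LinearMap.ker s.mulVecLin) < Fintype.card n := by
  have hrange : 1 ≤ Module.finrank K (LinearMap.range s.mulVecLin) := by
    rwa [Submodule.one_le_finrank_iff, Ne, LinearMap.range_eq_bot, ← toLin'_apply',
      map_eq_zero_iff _ toLin'.injective]
  have := s.mulVecLin.finrank_range_add_finrank_ker
  rw [Module.finrank_fintype_fun_eq_card] at this
  omega

theorem exists_eigenvector_of_mul_mul_adjugate_eq_zero {s : Matrix (Fin 2) (Fin 2) K}
    (hs : s ≠ 0) (hdet : s.det = 0) :
    ∃ v : Fin 2 → K, v ≠ 0 ∧ ∀ M : Matrix (Fin 2) (Fin 2) K,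
      s * M * s.adjugate = 0 → ∃ μ : K, M *ᵥ v = μ • v := by
  have hadj : s.adjugate ≠ 0 := fun h => hs (by
    have := adjugate_adjugate s (by rw [Fintype.card_fin]; decide)
    rwa [h, adjugate_zero, Fintype.card_fin, Nat.sub_self, pow_zero, one_smul, eq_comm] at this)
  obtain ⟨j, hj⟩ : ∃ j, s.adjugate *ᵥ Pi.single j 1 ≠ 0 := by
    by_contra! h
    exact hadj (ext fun i j => by simpa [mulVec_single_one] using congrFun (h j) i)
  have hker : ∀ M : Matrix (Fin 2) (Fin 2) K, s * M * s.adjugate = 0 →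
      M *ᵥ (s.adjugate *ᵥ Pi.single j 1) ∈ LinearMap.ker s.mulVecLin := fun M hM => by
    rw [LinearMap.mem_ker, mulVecLin_apply, mulVec_mulVec, mulVec_mulVec, hM, zero_mulVec]
  have hv : s.adjugate *ᵥ Pi.single j 1 ∈ LinearMap.ker s.mulVecLin := by
    simpa only [one_mulVec] using hker 1 (by rw [Matrix.mul_one, mul_adjugate, hdet, zero_smul])
  refine ⟨_, hj, fun M hM => ?_⟩
  obtain ⟨μ, hμ⟩ := Submodule.exists_smul_eq_of_finrank_le_one
    (Nat.lt_succ_iff.mp (by simpa using finrank_ker_mulVecLin_lt_card hs)) hv hj (hker M hM)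
  exact ⟨μ, hμ.symm⟩

end Matrix

namespace Matrix.SpecialLinearGroup

variable {n 𝕜 : Type*} [Fintype n] [DecidableEq n]

theorem exists_tendsto_subseq_of_not_tendsto_norm_atTop [NormedField 𝕜] [ProperSpace 𝕜]
    {t : ℕ → SpecialLinearGroup n 𝕜} (ht : ¬Tendsto (fun i => ‖(t i : Matrix n n 𝕜)‖) atTop atTop) :
    ∃ φ : ℕ → ℕ, StrictMono φ ∧ ∃ L : SpecialLinearGroup n 𝕜,
      Tendsto (fun k => (t (φ k) : Matrix n n 𝕜)) atTop (𝓝 (L : Matrix n n 𝕜)) := by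
  have : ProperSpace (Matrix n n 𝕜) := pi_properSpace
  obtain ⟨L, φ, hφ, hL⟩ := _root_.exists_tendsto_subseq_of_not_tendsto_norm_atTop ht
  have hdet : L.det = 1 := tendsto_nhds_unique ((continuous_id.matrix_det.tendsto L).comp hL)
    (by simpa only [Function.comp_def, id, det_coe] using tendsto_const_nhds)
  exact ⟨φ, hφ, ⟨L, hdet⟩, hL⟩

theorem exists_singular_limit_of_tendsto_norm_atTop [RCLike 𝕜] [Nonempty n]
    {t : ℕ → SpecialLinearGroup n 𝕜}
    (ht : Tendsto (fun i => ‖(t i : Matrix n n 𝕜)‖) atTop atTop) :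
    ∃ s : Matrix n n 𝕜, s ≠ 0 ∧ s.det = 0 ∧ ∀ (C : ℕ → Matrix n n 𝕜) (C' L : Matrix n n 𝕜),
      Tendsto C atTop (𝓝 C') →
      Tendsto (fun i => (t i : Matrix n n 𝕜) * C i * (↑(t i)⁻¹ : Matrix n n 𝕜)) atTop (𝓝 L) →
      s * C' * s.adjugate = 0 := by
  set c : ℕ → 𝕜 := fun i => ((‖(t i : Matrix n n 𝕜)‖⁻¹ : ℝ) : 𝕜)
  have hc : Tendsto c atTop (𝓝 0) := by
    have := ((RCLike.continuous_ofReal (K := 𝕜)).tendsto 0).comp (tendsto_inv_atTop_zero.comp ht)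
    rwa [RCLike.ofReal_zero] at this
  have hsphere : ∀ i, c i • (t i : Matrix n n 𝕜) ∈ Metric.sphere 0 1 := fun i => by
    have : (t i : Matrix n n 𝕜) ≠ 0 := fun h => by simpa [h] using (t i).det_coe
    simp [c, norm_smul, this]
  obtain ⟨s, hs, φ, hφ, hlim⟩ : ∃ s ∈ Metric.sphere (0 : Matrix n n 𝕜) 1, ∃ φ : ℕ → ℕ,
      StrictMono φ ∧ Tendsto (fun k => c (φ k) • (t (φ k) : Matrix n n 𝕜)) atTop (𝓝 s) :=
    (isCompact_sphere 0 1).tendsto_subseq hsphere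
  have hcφ := hc.comp hφ.tendsto_atTop
  refine ⟨s, ne_zero_of_mem_unit_sphere ⟨s, hs⟩, ?_, fun C C' L hC hL => ?_⟩
  · refine tendsto_nhds_unique ((continuous_id.matrix_det.tendsto s).comp hlim) ?_
    simpa [Function.comp_def, det_smul] using hcφ.pow (Fintype.card n)
  · refine tendsto_nhds_unique ((hlim.mul (hC.comp hφ.tendsto_atTop)).mul
      ((continuous_id.matrix_adjugate.tendsto s).comp hlim)) ?_
    have key : ∀ i, c i • (t i : Matrix n n 𝕜) * C i * adjugate (c i • (t i : Matrix n n 𝕜)) =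
        (c i ^ (Fintype.card n - 1) * c i) •
          ((t i : Matrix n n 𝕜) * C i * (↑(t i)⁻¹ : Matrix n n 𝕜)) := by
      intro i
      simp only [adjugate_smul, coe_inv, Matrix.smul_mul, Matrix.mul_smul, smul_smul]
    simpa only [Function.comp_def, id, key, mul_zero, zero_smul] using
      ((hcφ.pow _).mul hcφ).smul (hL.comp hφ.tendsto_atTop)

end Matrix.SpecialLinearGroup

theorem conjugating_sequence_has_convergent_subsequence_general
    (A B t : ℕ → SL2C) (A' B' : SL2C)
    (hA : SLTendsto A A') (hB : SLTendsto B B')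
    (hnc : NoCommonEigenvector A' B')
    (hconvA : ∃ LA : SL2C, SLTendsto (fun i => t i * A i * (t i)⁻¹) LA)
    (hconvB : ∃ LB : SL2C, SLTendsto (fun i => t i * B i * (t i)⁻¹) LB) :
    ∃ φ : ℕ → ℕ, StrictMono φ ∧ ∃ L : SL2C, SLTendsto (fun k => t (φ k)) L := by
  by_cases ht : Tendsto (fun i => ‖(t i : Matrix (Fin 2) (Fin 2) ℂ)‖) atTop atTop
  · obtain ⟨LA, hLA⟩ := hconvA
    obtain ⟨LB, hLB⟩ := hconvB
    obtain ⟨s, hs0, hdet, hconj⟩ :=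
      SpecialLinearGroup.exists_singular_limit_of_tendsto_norm_atTop ht
    obtain ⟨v, hv0, hv⟩ := exists_eigenvector_of_mul_mul_adjugate_eq_zero hs0 hdet
    exact (hnc ⟨v, hv0, hv _ (hconj _ _ _ hA hLA), hv _ (hconj _ _ _ hB hLB)⟩).elim
  · exact SpecialLinearGroup.exists_tendsto_subseq_of_not_tendsto_norm_atTop ht

/-- If `A_i → A` and `B_i → B` with `A`, `B` loxodromic and without a common
eigenvector, and both sequences of conjugates `t_i A_i t_i⁻¹` and `t_i B_i t_i⁻¹`
converge, then `(t_i)` has a convergent subsequence. -/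
theorem conjugating_sequence_has_convergent_subsequence
    (A B t : ℕ → SL2C) (A' B' : SL2C)
    (hA : SLTendsto A A') (hB : SLTendsto B B')
    (hAlox : Loxodromic A') (hBlox : Loxodromic B')
    (hnc : NoCommonEigenvector A' B')
    (hconvA : ∃ LA : SL2C, SLTendsto (fun i => t i * A i * (t i)⁻¹) LA)
    (hconvB : ∃ LB : SL2C, SLTendsto (fun i => t i * B i * (t i)⁻¹) LB) :
    ∃ φ : ℕ → ℕ, StrictMono φ ∧ ∃ L : SL2C, SLTendsto (fun k => t (φ k)) L :=
  conjugating_sequence_has_convergent_subsequence_general A B t A' B' hA hB hnc hconvA hconvB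
end

section
/- Let Γ be a group generated by two subgroups Γ¹ and Γ², and let ρ_i : Γ → SL(2,ℂ) be a sequence of group homomorphisms. Assume: (i) for every g ∈ Γ¹ the sequence (ρ_i(g)) converges in SL(2,ℂ); (ii) there exist elements t_i ∈ SL(2,ℂ) such that for every g ∈ Γ² the sequence (t_i ρ_i(g) t_i⁻¹) converges in SL(2,ℂ); (iii) there exist γ, δ ∈ Γ¹ ∩ Γ² such that the limits of (ρ_i(γ)) and (ρ_i(δ)) are loxodromic elements with no common eigenvector in ℂ². Then there is a subsequence (ρ_{i_k}) such that (ρ_{i_k}(g)) converges in SL(2,ℂ) for every g ∈ Γ. -/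
/-!
Normalise the conjugators to the unit ball, `sᵢ = cᵢ tᵢ` with `cᵢ = (1 + ‖tᵢ‖)⁻¹`, and pass to a
subsequence along which `cᵢ → c` and `sᵢ → s`. If `c ≠ 0`, the `tᵢ` converge in `SL(2,ℂ)`, so the
`ρᵢ` converge on `Γ²` as well as on `Γ¹`, hence on the group they generate. If `c = 0`, then `s`
is a nonzero singular matrix, and for every `g ∈ Γ²` with `ρᵢ(g) → L` we get
`s L (adj s) = lim cᵢ² tᵢ ρᵢ(g) tᵢ⁻¹ = 0`. So `L` preserves the line `ker s`, which contains the
image of `adj s`; applied to `γ` and `δ` this is a common eigenvector of their limits.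
-/

open Matrix Filter Topology

namespace Matrix

variable {K : Type*} [Field K]

theorem exists_smul_eq_of_mulVec_eq_zero {s : Matrix (Fin 2) (Fin 2) K} (hs : s ≠ 0)
    {v w : Fin 2 → K} (hv : v ≠ 0) (hsv : s *ᵥ v = 0) (hsw : s *ᵥ w = 0) :
    ∃ c : K, c • v = w := by
  set N := LinearMap.ker s.mulVecLin
  have hv_mem : v ∈ N := hsv
  have hN : N ≠ ⊤ := fun h ↦ hs <| ext_iff_mulVec.2 fun u ↦ by
    rw [zero_mulVec]
    exact Submodule.eq_top_iff'.1 h u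
  have hlt : Module.finrank K N < 2 := by simpa using Submodule.finrank_lt hN
  have hpos : Module.finrank K N ≠ 0 := fun h ↦
    hv (by simpa [Submodule.finrank_eq_zero.1 h] using hv_mem)
  have hone : Module.finrank K N = 1 := by omega
  have hw : w ∈ K ∙ v := eq_span_singleton_of_mem_of_finrank_eq_one hone hv_mem hv ▸ hsw
  exact Submodule.mem_span_singleton.1 hw

theorem exists_common_eigenvector_of_mul_mul_adjugate_eq_zero
    {s A B : Matrix (Fin 2) (Fin 2) K} (hs : s ≠ 0) (hdet : s.det = 0)
    (hA : s * A * s.adjugate = 0) (hB : s * B * s.adjugate = 0) :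
    ∃ v ≠ 0, (∃ μ : K, A *ᵥ v = μ • v) ∧ (∃ ν : K, B *ᵥ v = ν • v) := by
  have hadj : s.adjugate ≠ 0 := fun h ↦ hs <| by
    simpa [adjugate_adjugate s (by simp), hdet] using congrArg adjugate h
  obtain ⟨u, hu⟩ : ∃ u, s.adjugate *ᵥ u ≠ 0 := by
    by_contra! h
    exact hadj (ext_iff_mulVec.2 fun u ↦ by simp [h u])
  have hker : s *ᵥ (s.adjugate *ᵥ u) = 0 := by
    rw [mulVec_mulVec, mul_adjugate, hdet, zero_smul, zero_mulVec]
  have eigen : ∀ M : Matrix (Fin 2) (Fin 2) K, s * M * s.adjugate = 0 →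
      ∃ μ : K, M *ᵥ (s.adjugate *ᵥ u) = μ • (s.adjugate *ᵥ u) := fun M hM ↦ by
    obtain ⟨μ, hμ⟩ := exists_smul_eq_of_mulVec_eq_zero hs hu hker
      (w := M *ᵥ (s.adjugate *ᵥ u)) (by rw [mulVec_mulVec, mulVec_mulVec, hM, zero_mulVec])
    exact ⟨μ, hμ.symm⟩
  exact ⟨_, hu, eigen A hA, eigen B hB⟩

end Matrix

section ConvergentSubgroup

variable {ι G H : Type*} [Group G] [Group H] [TopologicalSpace H] [IsTopologicalGroup H]

def convergentSubgroup (l : Filter ι) (ρ : ι → G →* H) : Subgroup G where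
  carrier := {g | ∃ L, Tendsto (fun i ↦ ρ i g) l (𝓝 L)}
  one_mem' := ⟨1, by simpa using tendsto_const_nhds⟩
  mul_mem' := fun ⟨L, hL⟩ ⟨M, hM⟩ ↦ ⟨L * M, by simpa using hL.mul hM⟩
  inv_mem' := fun ⟨L, hL⟩ ↦ ⟨L⁻¹, by simpa using hL.inv⟩

@[simp]
theorem mem_convergentSubgroup {l : Filter ι} {ρ : ι → G →* H} {g : G} :
    g ∈ convergentSubgroup l ρ ↔ ∃ L, Tendsto (fun i ↦ ρ i g) l (𝓝 L) :=
  Iff.rfl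

theorem Filter.Tendsto.of_conj {l : Filter ι} {t a : ι → H} {T K : H} (ht : Tendsto t l (𝓝 T))
    (hK : Tendsto (fun i ↦ t i * a i * (t i)⁻¹) l (𝓝 K)) :
    Tendsto a l (𝓝 (T⁻¹ * K * T)) := by
  simpa [mul_assoc] using (ht.inv.mul hK).mul ht

end ConvergentSubgroup

namespace Matrix.SpecialLinearGroup

section Rescaled

variable {ι n R : Type*} [Fintype n] [DecidableEq n] {l : Filter ι} [l.NeBot]

theorem exists_tendsto_of_smul_tendsto [Field R] [TopologicalSpace R]
    [IsTopologicalDivisionRing R] [T1Space R] {c : ι → R} {t : ι → SpecialLinearGroup n R}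
    {a : R} {s : Matrix n n R} (hc : Tendsto c l (𝓝 a)) (ha : a ≠ 0) (hc₀ : ∀ i, c i ≠ 0)
    (hs : Tendsto (fun i ↦ c i • (t i : Matrix n n R)) l (𝓝 s)) :
    ∃ T : SpecialLinearGroup n R, Tendsto t l (𝓝 T) := by
  have ht : Tendsto (fun i ↦ (t i : Matrix n n R)) l (𝓝 (a⁻¹ • s)) := by
    refine ((hc.inv₀ ha).smul hs).congr fun i ↦ ?_
    rw [smul_smul, inv_mul_cancel₀ (hc₀ i), one_smul]
  obtain ⟨T, hT⟩ := isClosedEmbedding_val.isClosed_range.mem_of_tendsto ht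
    (Eventually.of_forall fun i ↦ ⟨t i, rfl⟩)
  exact ⟨T, isClosedEmbedding_val.isInducing.tendsto_nhds_iff.2 (hT ▸ ht)⟩

variable [Nonempty n] [CommRing R] [TopologicalSpace R] [IsTopologicalRing R] [T2Space R]
  {c : ι → R} {t : ι → SpecialLinearGroup n R} {s : Matrix n n R}

theorem det_eq_zero_of_smul_tendsto (hc : Tendsto c l (𝓝 0))
    (hs : Tendsto (fun i ↦ c i • (t i : Matrix n n R)) l (𝓝 s)) :
    s.det = 0 := by
  have hdet : ∀ i, (c i • (t i : Matrix n n R)).det = c i ^ Fintype.card n :=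
    fun i ↦ by rw [det_smul, det_coe, mul_one]
  refine tendsto_nhds_unique ((continuous_id.matrix_det.tendsto s).comp hs) ?_
  simp only [Function.comp_def, id, hdet]
  simpa [zero_pow Fintype.card_ne_zero] using hc.pow (Fintype.card n)

theorem mul_mul_adjugate_eq_zero_of_tendsto {a : ι → SpecialLinearGroup n R}
    {L K : SpecialLinearGroup n R} (hc : Tendsto c l (𝓝 0))
    (hs : Tendsto (fun i ↦ c i • (t i : Matrix n n R)) l (𝓝 s)) (ha : Tendsto a l (𝓝 L))
    (hK : Tendsto (fun i ↦ t i * a i * (t i)⁻¹) l (𝓝 K)) :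
    s * L * s.adjugate = 0 := by
  have hrescale : ∀ i, (c i • (t i : Matrix n n R)) * a i * (c i • (t i : Matrix n n R)).adjugate
      = c i ^ Fintype.card n • ((t i * a i * (t i)⁻¹ : SpecialLinearGroup n R) : Matrix n n R) := by
    intro i
    rw [adjugate_smul, coe_mul, coe_mul, coe_inv, smul_mul_assoc, smul_mul_assoc, mul_smul_comm,
      smul_smul, ← pow_succ', Nat.sub_add_cancel Fintype.card_pos]
  have hlim : Tendsto (fun i ↦ (c i • (t i : Matrix n n R)) * a i *
      (c i • (t i : Matrix n n R)).adjugate) l (𝓝 (s * L * s.adjugate)) :=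
    (hs.mul ((continuous_subtype_val.tendsto L).comp ha)).mul
      ((continuous_id.matrix_adjugate.tendsto s).comp hs)
  have hconj : Tendsto (fun i ↦ ((t i * a i * (t i)⁻¹ : SpecialLinearGroup n R) : Matrix n n R))
      l (𝓝 K) := (continuous_subtype_val.tendsto K).comp hK
  refine tendsto_nhds_unique hlim ?_
  simp_rw [hrescale]
  simpa [zero_pow Fintype.card_ne_zero] using (hc.pow (Fintype.card n)).smul hconj

end Rescaled

section Compactness

attribute [local instance] Matrix.normedAddCommGroup Matrix.normedSpace

variable {n 𝕜 : Type*} [Fintype n] [DecidableEq n] [Nonempty n] [RCLike 𝕜]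

theorem exists_subseq_tendsto_or_rescaled_tendsto (t : ℕ → SpecialLinearGroup n 𝕜) :
    ∃ φ : ℕ → ℕ, StrictMono φ ∧
      ((∃ T, Tendsto (t ∘ φ) atTop (𝓝 T)) ∨
        ∃ (c : ℕ → 𝕜) (s : Matrix n n 𝕜), s ≠ 0 ∧ s.det = 0 ∧ Tendsto c atTop (𝓝 0) ∧
          Tendsto (fun k ↦ c k • (t (φ k) : Matrix n n 𝕜)) atTop (𝓝 s)) := by
  have : ProperSpace (Matrix n n 𝕜) := FiniteDimensional.proper_rclike 𝕜 _
  set c : ℕ → ℝ := fun i ↦ (1 + ‖(t i : Matrix n n 𝕜)‖)⁻¹ with hc_def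
  have hc_pos : ∀ i, 0 < c i := fun i ↦ by positivity
  have hnorm : ∀ i, ‖(c i : 𝕜) • (t i : Matrix n n 𝕜)‖ = 1 - c i := fun i ↦ by
    have : 0 < 1 + ‖(t i : Matrix n n 𝕜)‖ := by positivity
    rw [norm_smul, RCLike.norm_ofReal, abs_of_pos (hc_pos i), hc_def]
    field_simp
    ring
  have hmem : ∀ i, (c i, (c i : 𝕜) • (t i : Matrix n n 𝕜)) ∈
      Set.Icc 0 1 ×ˢ Metric.closedBall 0 1 := fun i ↦
    ⟨⟨(hc_pos i).le, by linarith [hnorm i ▸ norm_nonneg ((c i : 𝕜) • (t i : Matrix n n 𝕜))]⟩,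
      by simp only [Metric.mem_closedBall, dist_zero_right, hnorm]; linarith [hc_pos i]⟩
  obtain ⟨⟨a, s⟩, ⟨ha, -⟩, φ, hφ, hlim⟩ :=
    (isCompact_Icc.prod (isCompact_closedBall 0 1)).tendsto_subseq hmem
  have hcφ : Tendsto (fun k ↦ c (φ k)) atTop (𝓝 a) := (continuous_fst.tendsto _).comp hlim
  have hcφ' : Tendsto (fun k ↦ (c (φ k) : 𝕜)) atTop (𝓝 a) :=
    (RCLike.continuous_ofReal.tendsto _).comp hcφ
  have hsφ : Tendsto (fun k ↦ (c (φ k) : 𝕜) • (t (φ k) : Matrix n n 𝕜)) atTop (𝓝 s) :=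
    (continuous_snd.tendsto _).comp hlim
  refine ⟨φ, hφ, ?_⟩
  rcases ha.1.eq_or_lt with rfl | ha_pos
  · have hc₀ : Tendsto (fun k ↦ (c (φ k) : 𝕜)) atTop (𝓝 0) := by simpa using hcφ'
    have hs_norm : ‖s‖ = 1 := tendsto_nhds_unique hsφ.norm <| by
      simp only [hnorm]
      simpa using (tendsto_const_nhds (x := (1 : ℝ))).sub hcφ
    exact .inr ⟨_, s, norm_ne_zero_iff.1 (by simp [hs_norm]),
      det_eq_zero_of_smul_tendsto hc₀ hsφ, hc₀, hsφ⟩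
  · exact .inl (exists_tendsto_of_smul_tendsto hcφ' (by exact_mod_cast ha_pos.ne')
      (fun k ↦ by exact_mod_cast (hc_pos (φ k)).ne') hsφ)

end Compactness

end Matrix.SpecialLinearGroup

open Matrix.SpecialLinearGroup

theorem slTendsto_iff {A : ℕ → SL2C} {L : SL2C} : SLTendsto A L ↔ Tendsto A atTop (𝓝 L) :=
  Topology.IsInducing.subtypeVal.tendsto_nhds_iff.symm

/-- If `Γ` is generated by subgroups `Γ¹` and `Γ²`, the restrictions of `ρ_i` to `Γ¹`
converge, the restrictions to `Γ²` converge up to conjugation by elements `t_i`, and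
there are `γ, δ ∈ Γ¹ ∩ Γ²` whose images converge to loxodromic elements with no
common eigenvector, then a subsequence of `ρ_i` converges on all of `Γ`. -/
theorem amalgamated_convergence {Γ : Type*} [Group Γ] (Γ₁ Γ₂ : Subgroup Γ)
    (hgen : Subgroup.closure ((Γ₁ : Set Γ) ∪ (Γ₂ : Set Γ)) = ⊤)
    (ρ : ℕ → Γ →* SL2C)
    (h1 : ∀ g ∈ Γ₁, ∃ L : SL2C, SLTendsto (fun i => ρ i g) L)
    (h2 : ∃ t : ℕ → SL2C, ∀ g ∈ Γ₂,
      ∃ L : SL2C, SLTendsto (fun i => t i * ρ i g * (t i)⁻¹) L)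
    (h3 : ∃ γ ∈ Γ₁ ⊓ Γ₂, ∃ δ ∈ Γ₁ ⊓ Γ₂, ∃ Lγ Lδ : SL2C,
      SLTendsto (fun i => ρ i γ) Lγ ∧ SLTendsto (fun i => ρ i δ) Lδ ∧
      Loxodromic Lγ ∧ Loxodromic Lδ ∧ NoCommonEigenvector Lγ Lδ) :
    ∃ φ : ℕ → ℕ, StrictMono φ ∧
      ∀ g : Γ, ∃ L : SL2C, SLTendsto (fun k => ρ (φ k) g) L := by
  obtain ⟨t, ht⟩ := h2
  obtain ⟨γ, hγ, δ, hδ, Lγ, Lδ, hγL, hδL, -, -, hnoeig⟩ := h3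
  simp only [slTendsto_iff] at h1 ht hγL hδL ⊢
  obtain ⟨φ, hφ, ⟨T, hT⟩ | ⟨c, s, hs, hdet, hc, hcs⟩⟩ :=
    exists_subseq_tendsto_or_rescaled_tendsto t
  · refine ⟨φ, hφ, fun g ↦ ?_⟩
    suffices convergentSubgroup atTop (fun k ↦ ρ (φ k)) = ⊤ from
      mem_convergentSubgroup.1 (this ▸ Subgroup.mem_top g)
    rw [eq_top_iff, ← hgen, Subgroup.closure_le]
    rintro g (hg | hg)
    · obtain ⟨L, hL⟩ := h1 g hg
      exact ⟨L, hL.comp hφ.tendsto_atTop⟩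
    · obtain ⟨K, hK⟩ := ht g hg
      exact ⟨_, hT.of_conj (hK.comp hφ.tendsto_atTop)⟩
  · have hzero : ∀ g ∈ Γ₂, ∀ L, Tendsto (fun i ↦ ρ i g) atTop (𝓝 L) →
        s * (L : Matrix (Fin 2) (Fin 2) ℂ) * s.adjugate = 0 := fun g hg L hL ↦
      mul_mul_adjugate_eq_zero_of_tendsto hc hcs (hL.comp hφ.tendsto_atTop)
        ((ht g hg).choose_spec.comp hφ.tendsto_atTop)
    exact (hnoeig <| Matrix.exists_common_eigenvector_of_mul_mul_adjugate_eq_zero hs hdet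
      (hzero γ hγ.2 Lγ hγL) (hzero δ hδ.2 Lδ hδL)).elim
end

section
/- Let (t_i) be a sequence in SL(2,ℂ). Suppose there are nonzero vectors u₁, u₂, u₃ ∈ ℂ² spanning three pairwise distinct one-dimensional subspaces, nonzero vectors w₁, w₂, w₃ ∈ ℂ² spanning three pairwise distinct one-dimensional subspaces, and nonzero complex scalars c_{i,j} (for j = 1, 2, 3) such that c_{i,j} · (t_i u_j) → w_j as i → ∞ for each j. Then the sequence (t_i) has a convergent subsequence in SL(2,ℂ). -/
open Matrix Filter Topology

/-
If `cⱼ tᵢ uⱼ → wⱼ` with `det tᵢ = 1`, then taking 2×2 determinants gives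
`cⱼ cₖ · det(uⱼ, uₖ) → det(wⱼ, wₖ)`, so every product `cⱼ cₖ` (`j ≠ k`) converges to a
nonzero limit. Hence `c₀² = (c₀c₁)(c₀c₂)/(c₁c₂)` converges to a nonzero limit, so along a
subsequence `c₀` and then `c₁ = (c₀c₁)/c₀` converge to nonzero limits. Then `tᵢ u₀` and `tᵢ u₁`
converge, which determines the limit of `tᵢ` since `u₀, u₁` is a basis, and `SL(2,ℂ)` is
closed in the matrices.
-/

section Wedge

variable {R : Type*} [CommRing R]

def wedge (x y : Fin 2 → R) : R := x 0 * y 1 - x 1 * y 0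

lemma wedge_smul_smul (a b : R) (x y : Fin 2 → R) :
    wedge (a • x) (b • y) = a * b * wedge x y := by
  simp only [wedge, Pi.smul_apply, smul_eq_mul]
  ring

lemma wedge_mulVec (M : Matrix (Fin 2) (Fin 2) R) (x y : Fin 2 → R) :
    wedge (M *ᵥ x) (M *ᵥ y) = M.det * wedge x y := by
  simp only [wedge, mulVec, dotProduct, Fin.sum_univ_two, det_fin_two]
  ring

lemma wedge_eq_det (x y : Fin 2 → R) : wedge x y = (Matrix.of ![x, y]).det := by
  simp [wedge, det_fin_two]

lemma Filter.Tendsto.wedge [TopologicalSpace R] [IsTopologicalRing R] {α : Type*}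
    {l : Filter α} {x y : α → Fin 2 → R} {a b : Fin 2 → R}
    (hx : Tendsto x l (𝓝 a)) (hy : Tendsto y l (𝓝 b)) :
    Tendsto (fun i => _root_.wedge (x i) (y i)) l (𝓝 (_root_.wedge a b)) :=
  ((hx.apply_nhds 0).mul (hy.apply_nhds 1)).sub ((hx.apply_nhds 1).mul (hy.apply_nhds 0))

end Wedge

lemma wedge_ne_zero {K : Type*} [Field K] {x y : Fin 2 → K} (hx : x ≠ 0) (hy : y ≠ 0)
    (hxy : K ∙ x ≠ K ∙ y) : wedge x y ≠ 0 := by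
  have hli : LinearIndependent K ![x, y] := by
    rw [LinearIndependent.pair_iff' hx]
    rintro a rfl
    have ha : a ≠ 0 := by rintro rfl; simp at hy
    exact hxy (Submodule.span_singleton_smul_eq (IsUnit.mk0 a ha) x).symm
  rw [wedge_eq_det, ← isUnit_iff_ne_zero, ← isUnit_iff_isUnit_det]
  exact linearIndependent_rows_iff_isUnit.mp hli

lemma tendsto_mul_of_tendsto_smul_mulVec {K : Type*} [Field K] [TopologicalSpace K]
    [IsTopologicalRing K] {α : Type*} {l : Filter α} {M : α → Matrix (Fin 2) (Fin 2) K}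
    (hM : ∀ i, (M i).det = 1) {a b : α → K} {x y p q : Fin 2 → K} (hxy : wedge x y ≠ 0)
    (hp : Tendsto (fun i => a i • M i *ᵥ x) l (𝓝 p))
    (hq : Tendsto (fun i => b i • M i *ᵥ y) l (𝓝 q)) :
    Tendsto (fun i => a i * b i) l (𝓝 (wedge p q / wedge x y)) :=
  ((hp.wedge hq).div_const _).congr fun i => by
    rw [wedge_smul_smul, wedge_mulVec, hM, one_mul, mul_div_cancel_right₀ _ hxy]

lemma tendsto_of_tendsto_smul {K E : Type*} [NormedField K] [AddCommGroup E] [Module K E]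
    [TopologicalSpace E] [ContinuousSMul K E] {α : Type*} {l : Filter α} {a : α → K}
    {y : α → E} {γ : K} {p : E} (ha : Tendsto a l (𝓝 γ)) (hγ : γ ≠ 0) (ha0 : ∀ i, a i ≠ 0)
    (hy : Tendsto (fun i => a i • y i) l (𝓝 p)) : Tendsto y l (𝓝 (γ⁻¹ • p)) :=
  ((ha.inv₀ hγ).smul hy).congr fun i => inv_smul_smul₀ (ha0 i) _

lemma exists_subseq_tendsto_of_tendsto_sq {𝕜 : Type*} [NormedField 𝕜] [ProperSpace 𝕜]
    {z : ℕ → 𝕜} {s : 𝕜} (hz : Tendsto (fun i => z i ^ 2) atTop (𝓝 s)) (hs : s ≠ 0) :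
    ∃ φ : ℕ → ℕ, StrictMono φ ∧ ∃ e ≠ 0, Tendsto (z ∘ φ) atTop (𝓝 e) := by
  obtain ⟨R, hR⟩ := hz.norm.bddAbove_range
  have hbound : ∀ i, z i ∈ Metric.closedBall (0 : 𝕜) (max 1 R) := fun i => by
    have hi : ‖z i‖ ^ 2 ≤ R := by simpa [norm_pow] using hR (Set.mem_range_self i)
    rw [mem_closedBall_zero_iff]
    rcases le_total ‖z i‖ 1 with h | h
    · exact le_max_of_le_left h
    · exact le_max_of_le_right (by nlinarith)
  obtain ⟨e, -, φ, hφ, he⟩ := tendsto_subseq_of_bounded Metric.isBounded_closedBall hbound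
  have hes : e ^ 2 = s := tendsto_nhds_unique (he.pow 2) (hz.comp hφ.tendsto_atTop)
  exact ⟨φ, hφ, e, by rintro rfl; simp [eq_comm, hs] at hes, he⟩

lemma Matrix.tendsto_of_tendsto_mulVec {n R : Type*} [Fintype n] [DecidableEq n] [CommRing R]
    [TopologicalSpace R] [IsTopologicalRing R] {α : Type*} {l : Filter α}
    {M : α → Matrix n n R} {u v : n → n → R} (hu : IsUnit (Matrix.of u).det)
    (h : ∀ j, Tendsto (fun i => M i *ᵥ u j) l (𝓝 (v j))) :
    Tendsto M l (𝓝 ((Matrix.of v)ᵀ * (Matrix.of u)ᵀ⁻¹)) := by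
  have hcols : ∀ N : Matrix n n R, N * (Matrix.of u)ᵀ = (Matrix.of fun j => N *ᵥ u j)ᵀ := by
    intro N
    ext r s
    simp [mul_apply, mulVec, dotProduct]
  have hMu : Tendsto (fun i => M i * (Matrix.of u)ᵀ) l (𝓝 (Matrix.of v)ᵀ) := by
    simp_rw [hcols]
    exact tendsto_pi_nhds.2 fun r => tendsto_pi_nhds.2 fun s => (h s).apply_nhds r
  exact (hMu.mul_const _).congr fun i =>
    mul_nonsing_inv_cancel_right _ _ (by rwa [det_transpose])

lemma Matrix.SpecialLinearGroup.exists_coe_eq_of_tendsto {n R : Type*} [Fintype n]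
    [DecidableEq n] [CommRing R] [TopologicalSpace R] [IsTopologicalRing R] [T1Space R]
    {α : Type*} {l : Filter α} [l.NeBot] {M : α → SpecialLinearGroup n R} {L : Matrix n n R}
    (h : Tendsto (fun i => (M i : Matrix n n R)) l (𝓝 L)) :
    ∃ L' : SpecialLinearGroup n R, (L' : Matrix n n R) = L :=
  isClosedEmbedding_val.isClosed_range.mem_of_tendsto h (.of_forall fun i => ⟨M i, rfl⟩)

/-- Precompactness criterion: if `t_i` maps three distinct directions of ℂ² to three
(projectively) convergent directions with distinct limits, then `(t_i)` has a
convergent subsequence in SL(2,ℂ). -/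
theorem three_point_precompactness (t : ℕ → SL2C)
    (u w : Fin 3 → Fin 2 → ℂ) (c : ℕ → Fin 3 → ℂ)
    (hu : ∀ j, u j ≠ 0) (hw : ∀ j, w j ≠ 0)
    (hu_dist : ∀ j k : Fin 3, j ≠ k →
      (Submodule.span ℂ {u j} : Submodule ℂ (Fin 2 → ℂ)) ≠ Submodule.span ℂ {u k})
    (hw_dist : ∀ j k : Fin 3, j ≠ k →
      (Submodule.span ℂ {w j} : Submodule ℂ (Fin 2 → ℂ)) ≠ Submodule.span ℂ {w k})
    (hc : ∀ i j, c i j ≠ 0)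
    (hconv : ∀ j, Filter.Tendsto
      (fun i => c i j • ((t i : Matrix (Fin 2) (Fin 2) ℂ).mulVec (u j)))
      Filter.atTop (nhds (w j))) :
    ∃ φ : ℕ → ℕ, StrictMono φ ∧ ∃ L : SL2C, SLTendsto (fun k => t (φ k)) L := by
  have hwedge_u : ∀ j k, j ≠ k → wedge (u j) (u k) ≠ 0 := fun j k h =>
    wedge_ne_zero (hu j) (hu k) (hu_dist j k h)
  set ρ : Fin 3 → Fin 3 → ℂ := fun j k => wedge (w j) (w k) / wedge (u j) (u k)
  have hρ : ∀ j k, j ≠ k → ρ j k ≠ 0 := fun j k h =>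
    div_ne_zero (wedge_ne_zero (hw j) (hw k) (hw_dist j k h)) (hwedge_u j k h)
  have hprod : ∀ j k, j ≠ k → Tendsto (fun i => c i j * c i k) atTop (𝓝 (ρ j k)) :=
    fun j k h => tendsto_mul_of_tendsto_smul_mulVec (fun i => (t i).2) (hwedge_u j k h)
      (hconv j) (hconv k)
  have hsq : Tendsto (fun i => c i 0 ^ 2) atTop (𝓝 (ρ 0 1 * ρ 0 2 / ρ 1 2)) :=
    (((hprod 0 1 (by decide)).mul (hprod 0 2 (by decide))).div (hprod 1 2 (by decide))
      (hρ 1 2 (by decide))).congr fun i => by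
        show c i 0 * c i 1 * (c i 0 * c i 2) / (c i 1 * c i 2) = c i 0 ^ 2
        field_simp [hc i 1, hc i 2]
  obtain ⟨φ, hφ, e, he, hc₀⟩ := exists_subseq_tendsto_of_tendsto_sq hsq
    (div_ne_zero (mul_ne_zero (hρ 0 1 (by decide)) (hρ 0 2 (by decide))) (hρ 1 2 (by decide)))
  have hc₁ : Tendsto (fun k => c (φ k) 1) atTop (𝓝 (ρ 0 1 / e)) :=
    (((hprod 0 1 (by decide)).comp hφ.tendsto_atTop).div hc₀ he).congr fun k =>
      mul_div_cancel_left₀ _ (hc (φ k) 0)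
  have hlim := Matrix.tendsto_of_tendsto_mulVec
    (M := fun k => (t (φ k) : Matrix (Fin 2) (Fin 2) ℂ)) (u := ![u 0, u 1])
    (v := ![e⁻¹ • w 0, (ρ 0 1 / e)⁻¹ • w 1])
    (by rw [← wedge_eq_det, isUnit_iff_ne_zero]; exact hwedge_u 0 1 (by decide))
    (Fin.forall_fin_two.2
      ⟨tendsto_of_tendsto_smul hc₀ he (fun k => hc _ 0) ((hconv 0).comp hφ.tendsto_atTop),
        tendsto_of_tendsto_smul hc₁ (div_ne_zero (hρ 0 1 (by decide)) he) (fun k => hc _ 1)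
          ((hconv 1).comp hφ.tendsto_atTop)⟩)
  obtain ⟨L, hL⟩ := Matrix.SpecialLinearGroup.exists_coe_eq_of_tendsto hlim
  exact ⟨φ, hφ, L, by rw [SLTendsto, hL]; exact hlim⟩
end
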